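/- arXiv:2301.00136 — 2 statements merged into one kernel-verified Lean document; each statement's English description precedes it below -/
import Mathlib

section
/- For every Boolean function f : {0,1}^n → {0,1} with f(0^n) = 0, there exist k = alt(f) monotone Boolean functions f_1, ..., f_k such that f = f_1 ⊕ ... ⊕ f_k and additionally f_i(x) = 1 implies f_{i+1}(x) = 1 for all i ∈ [k-1] and all x (implication property). -/
def altGe {n : ℕ} (f : (Fin n → Bool) → Bool) (k : ℕ) : Prop :=
  ∃ x : Fin (k + 1) → (Fin n → Bool), StrictMono x ∧
    ∀ i : Fin k, f (x i.castSucc) ≠ f (x i.succ)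

/-- `alt f` is the maximum number of value changes of `f` along any chain. -/
noncomputable def alt {n : ℕ} (f : (Fin n → Bool) → Bool) : ℕ :=
  sSup {k | altGe f k}

def xorFold (l : List Bool) : Bool := l.foldr Bool.xor false

/-- Alternation along chains all of whose elements lie below `x`. -/
def altGeBelow {n : ℕ} (f : (Fin n → Bool) → Bool) (x : Fin n → Bool) (k : ℕ) : Prop :=
  ∃ c : Fin (k + 1) → (Fin n → Bool), StrictMono c ∧ (∀ i, c i ≤ x) ∧
    ∀ i : Fin k, f (c i.castSucc) ≠ f (c i.succ)

noncomputable def Af {n : ℕ} (f : (Fin n → Bool) → Bool) (x : Fin n → Bool) : ℕ :=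
  sSup {k | altGeBelow f x k}

lemma chain_le {n k : ℕ} {c : Fin (k + 1) → (Fin n → Bool)} (hc : StrictMono c) :
    k ≤ 2 ^ n := by
  have h := Fintype.card_le_of_injective c hc.injective
  simp only [Fintype.card_fin, Fintype.card_fun, Fintype.card_bool] at h
  omega

lemma bddAbove_altGe {n : ℕ} (f : (Fin n → Bool) → Bool) :
    BddAbove {k | altGe f k} := by
  refine ⟨2 ^ n, fun k hk => ?_⟩
  obtain ⟨c, hc, -⟩ := hk
  exact chain_le hc

lemma bddAbove_altGeBelow {n : ℕ} (f : (Fin n → Bool) → Bool) (x : Fin n → Bool) :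
    BddAbove {k | altGeBelow f x k} := by
  refine ⟨2 ^ n, fun k hk => ?_⟩
  obtain ⟨c, hc, -, -⟩ := hk
  exact chain_le hc

lemma altGeBelow_zero {n : ℕ} (f : (Fin n → Bool) → Bool) (x : Fin n → Bool) :
    altGeBelow f x 0 := by
  refine ⟨fun _ => fun _ => false, ?_, fun _ j => Bool.false_le _, fun i => i.elim0⟩
  intro i j hij
  simp only [Fin.lt_def] at hij
  omega

lemma Af_mem {n : ℕ} (f : (Fin n → Bool) → Bool) (x : Fin n → Bool) :
    altGeBelow f x (Af f x) :=
  Nat.sSup_mem ⟨0, by exact altGeBelow_zero f x⟩ (bddAbove_altGeBelow f x)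

lemma not_altGeBelow_succ {n : ℕ} (f : (Fin n → Bool) → Bool) (x : Fin n → Bool) :
    ¬ altGeBelow f x (Af f x + 1) := by
  intro h
  have := le_csSup (bddAbove_altGeBelow f x) h
  simp only [Af] at this ⊢
  omega

lemma Af_mono {n : ℕ} (f : (Fin n → Bool) → Bool) {x y : Fin n → Bool} (hxy : x ≤ y) :
    Af f x ≤ Af f y := by
  apply csSup_le_csSup (bddAbove_altGeBelow f y) ⟨0, by exact altGeBelow_zero f x⟩
  rintro k ⟨c, hc, hle, hch⟩
  exact ⟨c, hc, fun i => le_trans (hle i) hxy, hch⟩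

lemma Af_le_alt {n : ℕ} (f : (Fin n → Bool) → Bool) (x : Fin n → Bool) :
    Af f x ≤ alt f := by
  obtain ⟨c, hc, -, hch⟩ := Af_mem f x
  exact le_csSup (bddAbove_altGe f) ⟨c, hc, hch⟩

lemma parity {n : ℕ} (f : (Fin n → Bool) → Bool)
    (h0 : f (fun _ => false) = false) (x : Fin n → Bool) :
    f x = decide (Odd (Af f x)) := by
  obtain ⟨c, hmono, hle, hch⟩ := Af_mem f x
  -- the chain starts at value false
  have h0c : f (c 0) = false := by
    by_contra hne
    have hlt : (fun _ => false : Fin n → Bool) < c 0 := by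
      refine lt_of_le_of_ne (fun i => Bool.false_le _) ?_
      intro heq
      rw [← heq] at hne
      exact hne h0
    apply not_altGeBelow_succ f x
    refine ⟨Fin.cons (fun _ => false) c, ?_, ?_, ?_⟩
    · rw [Fin.strictMono_iff_lt_succ]
      intro i
      cases i using Fin.cases with
      | zero => simpa using hlt
      | succ j =>
        rw [← Fin.succ_castSucc]
        simpa using hmono (Fin.castSucc_lt_succ : j.castSucc < j.succ)
    · intro i
      cases i using Fin.cases with
      | zero => exact fun j => Bool.false_le _
      | succ j => simpa using hle j
    · intro i
      cases i using Fin.cases with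
      | zero =>
        simp only [Fin.castSucc_zero, Fin.cons_zero, Fin.cons_succ, h0]
        intro h
        exact hne h.symm
      | succ j =>
        rw [← Fin.succ_castSucc]
        simpa using hch j
  -- the chain ends at value f x
  have hlast : f (c (Fin.last (Af f x))) = f x := by
    by_contra hne
    have hlt : c (Fin.last (Af f x)) < x := by
      refine lt_of_le_of_ne (hle _) ?_
      intro heq
      exact hne (by rw [heq])
    apply not_altGeBelow_succ f x
    refine ⟨Fin.snoc c x, ?_, ?_, ?_⟩
    · rw [Fin.strictMono_iff_lt_succ]
      intro i
      cases i using Fin.lastCases with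
      | last =>
        simpa [Fin.succ_last] using hlt
      | cast j =>
        rw [Fin.succ_castSucc]
        simp only [Fin.snoc_castSucc]
        exact hmono (Fin.castSucc_lt_succ : j.castSucc < j.succ)
    · intro i
      cases i using Fin.lastCases with
      | last => simp
      | cast j => simpa using hle j
    · intro i
      cases i using Fin.lastCases with
      | last => simpa [Fin.succ_last] using hne
      | cast j =>
        rw [Fin.succ_castSucc]
        simp only [Fin.snoc_castSucc]
        exact hch j
  -- parity along the chain
  have hpar : ∀ i : Fin (Af f x + 1), f (c i) = decide (Odd i.val) := by
    intro i
    induction i using Fin.induction with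
    | zero => simpa using h0c
    | succ j ihj =>
      have hj := hch j
      have hflip : f (c j.succ) = ! f (c j.castSucc) := by
        cases hfc : f (c j.castSucc) <;> cases hfs : f (c j.succ) <;> simp_all
      rw [hflip, ihj]
      simp only [Fin.coe_castSucc, Fin.val_succ, Nat.odd_add_one, decide_not]
  have := hpar (Fin.last (Af f x))
  rw [hlast] at this
  simpa using this

lemma key : ∀ (k a : ℕ), a ≤ k →
    xorFold (List.ofFn fun i : Fin k => decide (k - i.val ≤ a)) = decide (Odd a) := by
  intro k
  induction k with
  | zero =>
    intro a ha
    interval_cases a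
    simp [xorFold]
  | succ k ih =>
    intro a ha
    rw [List.ofFn_succ]
    have hxc : ∀ (b : Bool) (l : List Bool), xorFold (b :: l) = Bool.xor b (xorFold l) :=
      fun _ _ => rfl
    rw [hxc]
    rcases Nat.lt_or_ge a (k + 1) with h | h
    · have ha' : a ≤ k := by omega
      have htail : (fun i : Fin k => decide (k + 1 - ((i : Fin k).succ : Fin (k+1)).val ≤ a)) =
          (fun i : Fin k => decide (k - i.val ≤ a)) := by
        funext i
        simp only [Fin.val_succ]
        exact decide_eq_decide.mpr (by have := i.isLt; omega)
      rw [htail, ih a ha']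
      have hhead : decide (k + 1 - ((0 : Fin (k + 1)) : ℕ) ≤ a) = false := by
        simp only [Fin.val_zero]
        exact decide_eq_false (by omega)
      rw [hhead, Bool.false_xor]
    · have ha' : a = k + 1 := by omega
      subst ha'
      have htail : (fun i : Fin k => decide (k + 1 - ((i : Fin k).succ : Fin (k+1)).val ≤ k + 1)) =
          (fun i : Fin k => decide (k - i.val ≤ k)) := by
        funext i
        simp only [Fin.val_succ]
        exact decide_eq_decide.mpr (by have := i.isLt; omega)
      rw [htail, ih k le_rfl]
      have hhead : decide (k + 1 - ((0 : Fin (k + 1)) : ℕ) ≤ k + 1) = true := by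
        simp
      rw [hhead, Bool.true_xor]
      simp only [Nat.odd_add_one, decide_not]

/-- Monotone decomposition of length alt(f) with the implication property. -/
theorem monotone_decomposition_implication (n : ℕ) (f : (Fin n → Bool) → Bool)
    (h0 : f (fun _ => false) = false) :
    ∃ fs : Fin (alt f) → (Fin n → Bool) → Bool,
      (∀ i, Monotone (fs i)) ∧
      (∀ i j : Fin (alt f), i ≤ j → ∀ x, fs i x = true → fs j x = true) ∧
      ∀ x, f x = xorFold (List.ofFn fun i => fs i x) := by
  refine ⟨fun i x => decide (alt f - i.val ≤ Af f x), ?_, ?_, ?_⟩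
  · intro i x y hxy
    have hmono := Af_mono f hxy
    rw [Bool.le_iff_imp]
    simp only [decide_eq_true_iff]
    omega
  · intro i j hij x
    have hij' : (i : ℕ) ≤ (j : ℕ) := hij
    simp only [decide_eq_true_iff]
    omega
  · intro x
    rw [key (alt f) (Af f x) (Af_le_alt f x), ← parity f h0 x]
end

section
/- For every Boolean function f : {0,1}^n → {0,1}, define f_i for 1 ≤ i ≤ 2n+1 by f_{2k}(x) = Th_k(x) and f_{2k+1}(x) = Th_{k+1}(x) ∨ (Th_k(x) ∧ f(x)). Then f_{i+1} ⇒ f_i for all i, each f_{2k} is monotone, each f_{2k+1} is monotone, and f = f_1 ⊕ f_2 ⊕ ... ⊕ f_{2n+1}. -/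
def wt {n : ℕ} (x : Fin n → Bool) : ℕ := (Finset.univ.filter fun i => x i = true).card

def Th {n : ℕ} (k : ℕ) (x : Fin n → Bool) : Bool := decide (k ≤ wt x)

theorem xorFold_cons (a : Bool) (l : List Bool) : xorFold (a :: l) = xor a (xorFold l) := rfl

theorem xorFold_append (l₁ l₂ : List Bool) :
    xorFold (l₁ ++ l₂) = xor (xorFold l₁) (xorFold l₂) := by
  induction l₁ with
  | nil => simp [xorFold]
  | cons a l ih => rw [List.cons_append, xorFold_cons, xorFold_cons, ih, Bool.xor_assoc]

theorem xorFold_replicate_false (m : ℕ) : xorFold (List.replicate m false) = false := by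
  induction m with
  | zero => rfl
  | succ m ih => rw [List.replicate_succ, xorFold_cons, ih, Bool.xor_false]

theorem xorFold_replicate_two_mul (k : ℕ) (b : Bool) :
    xorFold (List.replicate (2 * k) b) = false := by
  induction k with
  | zero => rfl
  | succ k ih =>
    rw [Nat.mul_succ, List.replicate_add, xorFold_append, ih]
    simp [xorFold]

theorem wt_le {n : ℕ} (x : Fin n → Bool) : wt x ≤ n :=
  (Finset.card_filter_le _ _).trans_eq (Finset.card_fin n)

theorem wt_strictMono {n : ℕ} : StrictMono (wt (n := n)) := by
  intro x y hxy
  obtain ⟨hle, i, hi⟩ := Pi.lt_def.mp hxy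
  have hsub : (Finset.univ.filter fun j => x j = true) ⊆ Finset.univ.filter fun j => y j = true :=
    Finset.monotone_filter_right _ fun j _ hj => Bool.le_iff_imp.mp (hle j) hj
  have hi' : x i = false ∧ y i = true := by
    revert hi; cases x i <;> cases y i <;> decide
  apply Finset.card_lt_card
  rw [Finset.ssubset_iff_of_subset hsub]
  exact ⟨i, by simp [hi'.2], by simp [hi'.1]⟩

/-- `thresholdProfile w b j` is `f_{j+1}(x)` at any `x` of weight `w` with `f x = b`. -/
def thresholdProfile (w : ℕ) (b : Bool) (j : ℕ) : Bool :=
  decide (j < 2 * w) || (decide (j = 2 * w) && b)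

theorem ite_threshold_eq_thresholdProfile (w j : ℕ) (b : Bool) :
    (if (j + 1) % 2 = 0 then decide ((j + 1) / 2 ≤ w)
      else (decide (j / 2 + 1 ≤ w) || (decide (j / 2 ≤ w) && b))) = thresholdProfile w b j := by
  rw [Bool.eq_iff_iff, thresholdProfile]
  split <;> cases b <;> simp <;> omega

theorem thresholdProfile_antitone (w : ℕ) (b : Bool) : Antitone (thresholdProfile w b) := by
  intro i j hij
  rw [Bool.le_iff_imp]
  cases b <;> simp [thresholdProfile] <;> omega

theorem thresholdProfile_le_of_lt {w w' : ℕ} (h : w < w') (b b' : Bool) (j : ℕ) :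
    thresholdProfile w b j ≤ thresholdProfile w' b' j := by
  rw [Bool.le_iff_imp]
  cases b <;> cases b' <;> simp [thresholdProfile] <;> omega

theorem ofFn_thresholdProfile {n w : ℕ} (hw : w ≤ n) (b : Bool) :
    List.ofFn (fun j : Fin (2 * n + 1) => thresholdProfile w b j) =
      List.replicate (2 * w) true ++ b :: List.replicate (2 * (n - w)) false := by
  refine List.ext_getElem (by simp; omega) fun j _ _ => ?_
  rw [List.getElem_ofFn, thresholdProfile]
  simp only [List.getElem_append, List.getElem_cons, List.getElem_replicate,
    List.length_replicate]
  split_ifs <;> cases b <;> simp <;> omega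

theorem xorFold_ofFn_thresholdProfile {n w : ℕ} (hw : w ≤ n) (b : Bool) :
    xorFold (List.ofFn fun j : Fin (2 * n + 1) => thresholdProfile w b j) = b := by
  rw [ofFn_thresholdProfile hw, xorFold_append, xorFold_replicate_two_mul, xorFold_cons,
    xorFold_replicate_false, Bool.false_xor, Bool.xor_false]

/-- `F j` is the paper's `f_{j+1}`. -/
theorem threshold_decomposition (n : ℕ) (f : (Fin n → Bool) → Bool)
    (F : Fin (2 * n + 1) → (Fin n → Bool) → Bool)
    (hF : ∀ (j : Fin (2 * n + 1)) (x : Fin n → Bool),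
      F j x = if ((j : ℕ) + 1) % 2 = 0 then Th (((j : ℕ) + 1) / 2) x
              else (Th ((j : ℕ) / 2 + 1) x || (Th ((j : ℕ) / 2) x && f x))) :
    (∀ i j : Fin (2 * n + 1), (j : ℕ) = (i : ℕ) + 1 →
      ∀ x, F j x = true → F i x = true) ∧
    (∀ j, Monotone (F j)) ∧
    (∀ x, f x = xorFold (List.ofFn fun j => F j x)) := by
  have hF' : ∀ j x, F j x = thresholdProfile (wt x) (f x) j := fun j x =>
    (hF j x).trans (ite_threshold_eq_thresholdProfile _ _ _)
  refine ⟨fun i j hij x => ?_, fun j x y hxy => ?_, fun x => ?_⟩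
  · rw [hF', hF']
    exact Bool.le_iff_imp.mp (thresholdProfile_antitone _ _ (by omega))
  · rcases hxy.eq_or_lt with rfl | hlt
    · exact le_rfl
    · rw [hF', hF']
      exact thresholdProfile_le_of_lt (wt_strictMono hlt) _ _ _
  · simp only [hF']
    exact (xorFold_ofFn_thresholdProfile (wt_le x) (f x)).symm
end
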